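/- Let r_0 ≥ 1 and L ≥ 1. Suppose the symmetrized two-particle boxes Λ_{S;L}(x) and Λ_{S;L}(y) are both interactive (each contains a point whose two d-dimensional components are within distance r_0 of each other) and dist_S(x,y) > 8L. Then for L sufficiently large (L > 2r_0 suffices) the boxes are fully separated: (Λ_L(x_1) ∪ Λ_L(x_2)) ∩ (Λ_L(y_1) ∪ Λ_L(y_2)) = ∅. -/
import Mathlib


/-- Embedding of `ℤ^d` into `ℝ^d`. -/
def toRd {d : ℕ} (u : Fin d → ℤ) : Fin d → ℝ := fun j => (u j : ℝ)

/-- The one-particle box of side `L` centered at `z ∈ ℝ^d`. -/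
def boxd {d : ℕ} (L : ℝ) (z : Fin d → ℝ) : Set (Fin d → ℤ) :=
  {u | ‖toRd u - z‖ ≤ L / 2}

/-- The symmetrized two-particle box of side `L` centered at `x = (x 0, x 1)`. -/
def boxS2 {d : ℕ} (L : ℝ) (x : Fin 2 → Fin d → ℝ) :
    Set ((Fin d → ℤ) × (Fin d → ℤ)) :=
  (boxd L (x 0)) ×ˢ (boxd L (x 1)) ∪ (boxd L (x 1)) ×ˢ (boxd L (x 0))

/-- A subset of `ℤ^{2d}` is interactive if it contains a point whose two
`d`-dimensional components are within sup-norm distance `r₀` of each other. -/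
def Interactive {d : ℕ} (r₀ : ℝ) (Λ : Set ((Fin d → ℤ) × (Fin d → ℤ))) : Prop :=
  ∃ p ∈ Λ, ‖toRd p.1 - toRd p.2‖ ≤ r₀

/-- The symmetrized distance on `(ℝ^d)^2`. -/
noncomputable def distS2 {d : ℕ} (x y : Fin 2 → Fin d → ℝ) : ℝ :=
  min (max ‖x 0 - y 0‖ ‖x 1 - y 1‖) (max ‖x 0 - y 1‖ ‖x 1 - y 0‖)

private lemma tri3 {d : ℕ} (a b c : Fin d → ℝ) : ‖a - c‖ ≤ ‖a - b‖ + ‖b - c‖ := by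
  have := dist_triangle a b c
  simpa [dist_eq_norm] using this

private lemma interactive_close {d : ℕ} (r₀ L : ℝ) (x : Fin 2 → Fin d → ℝ)
    (hx : Interactive r₀ (boxS2 L x)) : ‖x 0 - x 1‖ ≤ L + r₀ := by
  obtain ⟨p, hp, hpr⟩ := hx
  have hsym : ‖toRd p.2 - toRd p.1‖ ≤ r₀ := by rwa [norm_sub_rev]
  rcases hp with h | h <;> obtain ⟨h1, h2⟩ := h
  · have e1 : ‖toRd p.1 - x 0‖ ≤ L / 2 := h1
    have e2 : ‖toRd p.2 - x 1‖ ≤ L / 2 := h2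
    have t1 := tri3 (x 0) (toRd p.1) (x 1)
    have t2 := tri3 (toRd p.1) (toRd p.2) (x 1)
    rw [norm_sub_rev] at e1
    linarith
  · have e1 : ‖toRd p.1 - x 1‖ ≤ L / 2 := h1
    have e2 : ‖toRd p.2 - x 0‖ ≤ L / 2 := h2
    have t1 := tri3 (x 0) (toRd p.2) (x 1)
    have t2 := tri3 (toRd p.2) (toRd p.1) (x 1)
    rw [norm_sub_rev] at e2
    linarith

/-- If both symmetrized two-particle boxes `Λ_{S;L}(x)` and `Λ_{S;L}(y)` are
interactive, `dist_S(x,y) > 8L`, and `L > 2r₀` (with `r₀ ≥ 1`, `L ≥ 1`), then the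
boxes are fully separated. -/
theorem fully_separated_of_interactive {d : ℕ} (r₀ L : ℝ) (hr : 1 ≤ r₀) (hL1 : 1 ≤ L)
    (hL : 2 * r₀ < L) (x y : Fin 2 → Fin d → ℝ)
    (hx : Interactive r₀ (boxS2 L x)) (hy : Interactive r₀ (boxS2 L y))
    (hd : distS2 x y > 8 * L) :
    (boxd L (x 0) ∪ boxd L (x 1)) ∩ (boxd L (y 0) ∪ boxd L (y 1)) = ∅ := by
  have hxc := interactive_close r₀ L x hx
  have hyc := interactive_close r₀ L y hy
  have hxc' : ‖x 1 - x 0‖ ≤ L + r₀ := by rwa [norm_sub_rev]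
  have hyc' : ‖y 1 - y 0‖ ≤ L + r₀ := by rwa [norm_sub_rev]
  have hmin : distS2 x y ≤ max ‖x 0 - y 0‖ ‖x 1 - y 1‖ := min_le_left _ _
  ext u
  simp only [Set.mem_inter_iff, Set.mem_union, Set.mem_empty_iff_false, iff_false]
  rintro ⟨hxu | hxu, hyu | hyu⟩ <;>
  · have hx1 : ‖toRd u - _‖ ≤ L / 2 := hxu
    have hy1 : ‖toRd u - _‖ ≤ L / 2 := hyu
    rw [norm_sub_rev] at hx1
    have hclose := tri3 _ (toRd u) _ |>.trans (add_le_add hx1 hy1)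
    -- hclose : ‖x i - y j‖ ≤ L
    first
    | -- case x0, y0
      (have b1 : ‖x 1 - y 1‖ ≤ (L + r₀) + (L + (L + r₀)) := by
        have t1 := tri3 (x 1) (x 0) (y 1)
        have t2 := tri3 (x 0) (y 0) (y 1)
        linarith
       have hb : max ‖x 0 - y 0‖ ‖x 1 - y 1‖ ≤ 3 * L + 2 * r₀ := by
        apply max_le <;> linarith
       linarith [hmin.trans hb])
    | -- case x0, y1
      (have b0 : ‖x 0 - y 0‖ ≤ L + (L + r₀) := by
        have t2 := tri3 (x 0) (y 1) (y 0)
        linarith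
       have b1 : ‖x 1 - y 1‖ ≤ (L + r₀) + L := by
        have t1 := tri3 (x 1) (x 0) (y 1)
        linarith
       have hb : max ‖x 0 - y 0‖ ‖x 1 - y 1‖ ≤ 3 * L + 2 * r₀ := by
        apply max_le <;> linarith
       linarith [hmin.trans hb])
    | -- case x1, y0
      (have b0 : ‖x 0 - y 0‖ ≤ (L + r₀) + L := by
        have t1 := tri3 (x 0) (x 1) (y 0)
        linarith
       have b1 : ‖x 1 - y 1‖ ≤ L + (L + r₀) := by
        have t2 := tri3 (x 1) (y 0) (y 1)
        have : ‖y 0 - y 1‖ ≤ L + r₀ := hyc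
        linarith
       have hb : max ‖x 0 - y 0‖ ‖x 1 - y 1‖ ≤ 3 * L + 2 * r₀ := by
        apply max_le <;> linarith
       linarith [hmin.trans hb])
    | -- case x1, y1
      (have b0 : ‖x 0 - y 0‖ ≤ (L + r₀) + (L + (L + r₀)) := by
        have t1 := tri3 (x 0) (x 1) (y 0)
        have t2 := tri3 (x 1) (y 1) (y 0)
        have : ‖y 1 - y 0‖ ≤ L + r₀ := hyc'
        linarith
       have hb : max ‖x 0 - y 0‖ ‖x 1 - y 1‖ ≤ 3 * L + 2 * r₀ := by
        apply max_le <;> linarith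
       linarith [hmin.trans hb])
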